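/- arXiv:2010.15337 — 5 statements merged into one kernel-verified Lean document; each statement's English description precedes it below -/
import Mathlib

section
/- Let H be a bounded self-adjoint operator on a complex Hilbert space, P an orthogonal projection with Q = 1 − P, and suppose PHP ≤ aP on ran P and QHQ ≥ bQ on ran Q with a < 0 < b. Then H is invertible with ‖H⁻¹‖ ≤ max(|a|⁻¹, b⁻¹). -/
/-!
With `Q = 1 - P`, the reflection `R = P - Q` is an isometry, and the cross terms of
`re ⟪R ψ, H ψ⟫` cancel because `H` is self-adjoint, leaving
`re ⟪P ψ, H P ψ⟫ - re ⟪Q ψ, H Q ψ⟫ ≤ -min |a| b * ‖ψ‖ ^ 2`.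
Cauchy–Schwarz then bounds `H` below: `min |a| b * ‖ψ‖ ≤ ‖H ψ‖`. A self-adjoint operator
that is bounded below is invertible: its range is closed, and the orthogonal complement of
the range is its kernel, which is trivial.
-/

open ContinuousLinearMap
open scoped InnerProductSpace

section

variable {𝕜 E : Type*} [RCLike 𝕜] [NormedAddCommGroup E] [InnerProductSpace 𝕜 E]

theorem LinearMap.IsSymmetric.re_inner_sub_apply_add {T : E →ₗ[𝕜] E} (hT : T.IsSymmetric)
    (u v : E) :
    RCLike.re ⟪u - v, T (u + v)⟫_𝕜 = RCLike.re ⟪u, T u⟫_𝕜 - RCLike.re ⟪v, T v⟫_𝕜 := by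
  have hcross : RCLike.re ⟪u, T v⟫_𝕜 = RCLike.re ⟪v, T u⟫_𝕜 := by
    rw [← hT v u, inner_re_symm]
  simp only [map_add, inner_sub_left, inner_add_right, map_sub, hcross]
  ring

variable [CompleteSpace E]

theorem IsSelfAdjoint.isUnit_of_antilipschitz {T : E →L[𝕜] E}
    (hT : IsSelfAdjoint T) {K : NNReal} (hK : AntilipschitzWith K T) : IsUnit T := by
  rw [isUnit_iff_bijective, bijective_iff_dense_range_and_antilipschitz]
  refine ⟨?_, K, hK⟩
  rw [Submodule.topologicalClosure_eq_top_iff, orthogonal_range, hT.adjoint_eq,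
    LinearMap.ker_eq_bot]
  exact hK.injective

theorem IsSelfAdjoint.exists_inverse_of_norm_le {T : E →L[𝕜] E}
    (hT : IsSelfAdjoint T) {K : ℝ} (hK : 0 ≤ K) (h : ∀ x, ‖x‖ ≤ K * ‖T x‖) :
    ∃ S : E →L[𝕜] E, T ∘L S = 1 ∧ S ∘L T = 1 ∧ ‖S‖ ≤ K := by
  obtain ⟨u, rfl⟩ := hT.isUnit_of_antilipschitz (T.antilipschitz_of_bound (K := ⟨K, hK⟩) h)
  refine ⟨(↑u⁻¹ : E →L[𝕜] E), u.mul_inv, u.inv_mul, opNorm_le_bound _ hK fun x => ?_⟩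
  simpa only [← mul_apply_eq_comp, u.mul_inv, one_apply_eq_self] using
    h ((↑u⁻¹ : E →L[𝕜] E) x)

namespace IsStarProjection

variable {P : E →L[𝕜] E}

theorem inner_apply_sub_apply (hP : IsStarProjection P) (x y : E) : ⟪P x, y - P y⟫_𝕜 = 0 := by
  rw [← adjoint_inner_right, hP.isSelfAdjoint.adjoint_eq, map_sub, ← mul_apply_eq_comp,
    hP.isIdempotentElem.eq, sub_self, inner_zero_right]

theorem norm_sq_eq_norm_apply_sq_add_norm_sub_apply_sq (hP : IsStarProjection P) (x : E) :
    ‖x‖ ^ 2 = ‖P x‖ ^ 2 + ‖x - P x‖ ^ 2 := by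
  simpa only [add_sub_cancel, sq] using
    norm_add_sq_eq_norm_sq_add_norm_sq_of_inner_eq_zero _ _ (hP.inner_apply_sub_apply x x)

theorem norm_apply_sub_sub_apply (hP : IsStarProjection P) (x : E) :
    ‖P x - (x - P x)‖ = ‖x‖ := by
  rw [norm_sub_eq_norm_add (inner_eq_zero_symm.1 (hP.inner_apply_sub_apply x x)),
    add_sub_cancel]

theorem apply_apply (hP : IsStarProjection P) (x : E) : P (P x) = P x := by
  rw [← mul_apply_eq_comp, hP.isIdempotentElem.eq]

theorem apply_sub_apply (hP : IsStarProjection P) (x : E) : P (x - P x) = 0 := by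
  rw [map_sub, hP.apply_apply, sub_self]

end IsStarProjection

variable {H P : E →L[𝕜] E} {a b : ℝ}

theorem re_inner_apply_sub_sub_apply_le_of_block_bounds (hH : IsSelfAdjoint H)
    (hP : IsStarProjection P)
    (hPHP : ∀ ψ, P ψ = ψ → RCLike.re ⟪ψ, H ψ⟫_𝕜 ≤ a * ‖ψ‖ ^ 2)
    (hQHQ : ∀ ψ, P ψ = 0 → b * ‖ψ‖ ^ 2 ≤ RCLike.re ⟪ψ, H ψ⟫_𝕜) (ψ : E) :
    RCLike.re ⟪P ψ - (ψ - P ψ), H ψ⟫_𝕜 ≤ -(min (-a) b * ‖ψ‖ ^ 2) := by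
  have hu := hPHP _ (hP.apply_apply ψ)
  have hv := hQHQ _ (hP.apply_sub_apply ψ)
  have := hH.isSymmetric.re_inner_sub_apply_add (P ψ) (ψ - P ψ)
  rw [add_sub_cancel, coe_coe] at this
  rw [this, hP.norm_sq_eq_norm_apply_sq_add_norm_sub_apply_sq ψ]
  nlinarith [min_le_left (-a) b, min_le_right (-a) b, sq_nonneg ‖P ψ‖, sq_nonneg ‖ψ - P ψ‖]

theorem min_mul_norm_le_norm_apply_of_block_bounds (hH : IsSelfAdjoint H)
    (hP : IsStarProjection P)
    (hPHP : ∀ ψ, P ψ = ψ → RCLike.re ⟪ψ, H ψ⟫_𝕜 ≤ a * ‖ψ‖ ^ 2)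
    (hQHQ : ∀ ψ, P ψ = 0 → b * ‖ψ‖ ^ 2 ≤ RCLike.re ⟪ψ, H ψ⟫_𝕜) (ψ : E) :
    min (-a) b * ‖ψ‖ ≤ ‖H ψ‖ := by
  rcases eq_or_ne ψ 0 with rfl | hψ
  · simp
  refine le_of_mul_le_mul_right ?_ (norm_pos_iff.2 hψ)
  calc min (-a) b * ‖ψ‖ * ‖ψ‖ ≤ -RCLike.re ⟪P ψ - (ψ - P ψ), H ψ⟫_𝕜 := by
        have := re_inner_apply_sub_sub_apply_le_of_block_bounds hH hP hPHP hQHQ ψ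
        linarith
    _ ≤ ‖⟪P ψ - (ψ - P ψ), H ψ⟫_𝕜‖ := (neg_le_abs _).trans (RCLike.abs_re_le_norm _)
    _ ≤ ‖H ψ‖ * ‖ψ‖ := by
        rw [mul_comm, ← hP.norm_apply_sub_sub_apply ψ]
        exact norm_inner_le_norm _ _

end

/-- Key step in the Level Repulsion Principle: a bounded self-adjoint operator `H`
whose compression to the range of an orthogonal projection `P` is `≤ a < 0` and whose
compression to the range of `Q = 1 - P` is `≥ b > 0` is invertible with
`‖H⁻¹‖ ≤ max |a|⁻¹ b⁻¹`. -/
theorem invertible_of_block_bounds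
    {E : Type*} [NormedAddCommGroup E] [InnerProductSpace ℂ E] [CompleteSpace E]
    (H P : E →L[ℂ] E) (hH : IsSelfAdjoint H) (hP : IsSelfAdjoint P)
    (hPidem : P ∘L P = P)
    (a b : ℝ) (ha : a < 0) (hb : 0 < b)
    (hPHP : ∀ ψ : E, P ψ = ψ → (inner ℂ ψ (H ψ) : ℂ).re ≤ a * ‖ψ‖ ^ 2)
    (hQHQ : ∀ ψ : E, P ψ = 0 → b * ‖ψ‖ ^ 2 ≤ (inner ℂ ψ (H ψ) : ℂ).re) :
    ∃ T : E →L[ℂ] E, H ∘L T = 1 ∧ T ∘L H = 1 ∧ ‖T‖ ≤ max |a|⁻¹ b⁻¹ := by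
  have hc : 0 < min (-a) b := lt_min (neg_pos.2 ha) hb
  have hinv : (min (-a) b)⁻¹ ≤ max |a|⁻¹ b⁻¹ := by
    rcases min_choice (-a) b with h | h <;> rw [h]
    · exact abs_of_neg ha ▸ le_max_left _ _
    · exact le_max_right _ _
  have hbelow := min_mul_norm_le_norm_apply_of_block_bounds hH ⟨hPidem, hP⟩ hPHP hQHQ
  refine hH.exists_inverse_of_norm_le ((inv_nonneg.2 hc.le).trans hinv) fun x => ?_
  calc ‖x‖ ≤ (min (-a) b)⁻¹ * ‖H x‖ := (le_inv_mul_iff₀ hc).2 (hbelow x)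
    _ ≤ max |a|⁻¹ b⁻¹ * ‖H x‖ := by gcongr
end

section
/- Let H_Λ be a frustration-free Hamiltonian with ground state projection P_Λ, ground state functional ω_Λ(A) = Tr[P_Λ A]/Tr[P_Λ], and Ω : ℝ → [0,∞) non-increasing. Suppose x ∈ Λ has indistinguishability radius r, i.e. for all 0 ≤ k ≤ n ≤ r and A ∈ A_{b_x(k)}: ‖P_{b_x(n)} A P_{b_x(n)} − ω_Λ(A) P_{b_x(n)}‖ ≤ |b_x(k)| ‖A‖ Ω(n−k). Then for any 0 < k ≤ n ≤ r and A ∈ A_{b_x(k)}: |‖A P_{b_x(n)}‖ − ‖A P_Λ‖| ≤ ‖A‖ √(2 |b_x(k)| Ω(n−k)). -/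
/-!
Write `p = P_{b_x(n)}` and `q = P_Λ`; frustration-freeness says `q ≤ p`, i.e. `p q = q p = q`.
By the C⋆-identity `‖A p‖² = ‖p A*A p‖`, and the LTQO estimate for `A*A` places `p A*A p`
within `ε = |b_x(k)| ‖A‖² Ω(n−k)` of `ω(A*A) p`. Compressing by `q` places `q A*A q` within
`ε` of `ω(A*A) q`, so both `‖A p‖²` and `‖A q‖²` lie within `ε` of `|ω(A*A)|`. Since
`A q = A p q` we have `‖A q‖ ≤ ‖A p‖`, and `(a − b)² ≤ a² − b²` for `0 ≤ b ≤ a` gives the bound.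
-/

lemma abs_sub_le_sqrt_of_sq_sub_sq_le {a b δ : ℝ} (hb : 0 ≤ b) (hba : b ≤ a)
    (h : a ^ 2 - b ^ 2 ≤ δ) : |a - b| ≤ √δ := by
  rw [abs_of_nonneg (sub_nonneg.mpr hba)]
  apply Real.le_sqrt_of_sq_le
  nlinarith

section CStarRing

variable {R : Type*} [NormedRing R]

lemma norm_mul_mul_le_of_norm_le_one {q : R} (hq : ‖q‖ ≤ 1) (y : R) :
    ‖q * y * q‖ ≤ ‖y‖ :=
  calc ‖q * y * q‖ ≤ ‖q‖ * ‖y‖ * ‖q‖ := norm_mul₃_le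
    _ ≤ 1 * ‖y‖ * 1 := by gcongr
    _ = ‖y‖ := by ring

lemma norm_mul_le_norm_mul_of_mul_eq {p q : R} (hq : ‖q‖ ≤ 1) (hpq : p * q = q) (a : R) :
    ‖a * q‖ ≤ ‖a * p‖ :=
  calc ‖a * q‖ = ‖a * p * q‖ := by rw [mul_assoc, hpq]
    _ ≤ ‖a * p‖ * ‖q‖ := norm_mul_le _ _
    _ ≤ ‖a * p‖ := mul_le_of_le_one_right (norm_nonneg _) hq

variable [StarRing R] [CStarRing R]

lemma IsStarProjection.norm_eq_one {p : R} (hp : IsStarProjection p) (hp0 : p ≠ 0) :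
    ‖p‖ = 1 := by
  have h : ‖p‖ * ‖p‖ = ‖p‖ := by
    rw [← CStarRing.norm_star_mul_self, hp.isSelfAdjoint.star_eq, hp.isIdempotentElem.eq]
  have hpos : 0 < ‖p‖ := norm_pos_iff.mpr hp0
  nlinarith

lemma IsSelfAdjoint.norm_mul_sq {p : R} (hp : IsSelfAdjoint p) (a : R) :
    ‖a * p‖ ^ 2 = ‖p * (star a * a) * p‖ := by
  rw [sq, ← CStarRing.norm_star_mul_self, star_mul, hp.star_eq]
  noncomm_ring

variable {𝕜 : Type*} [NormedField 𝕜] [NormedAlgebra 𝕜 R]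

lemma norm_compress_sub_smul_le {p q x : R} {c : 𝕜} {ε : ℝ} (hq : IsStarProjection q)
    (hpq : p * q = q) (hqp : q * p = q) (h : ‖p * x * p - c • p‖ ≤ ε) :
    ‖q * x * q - c • q‖ ≤ ε := by
  have hcompress : q * (p * x * p - c • p) * q = q * x * q - c • q := by
    have hqq : q * q = q := hq.isIdempotentElem.eq
    calc q * (p * x * p - c • p) * q = (q * p) * x * (p * q) - c • ((q * p) * q) := by
          simp only [mul_sub, sub_mul, mul_smul_comm, smul_mul_assoc, mul_assoc]
      _ = q * x * q - c • q := by rw [hqp, hpq, hqq]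
  rw [← hcompress]
  exact (norm_mul_mul_le_of_norm_le_one (hq.norm_le q) _).trans h

lemma norm_mul_sq_sub_norm_mul_sq_le {p q : R} (a : R) {c : 𝕜} {ε : ℝ}
    (hp : IsStarProjection p) (hq : IsStarProjection q) (hq0 : q ≠ 0)
    (hpq : p * q = q) (hqp : q * p = q) (h : ‖p * (star a * a) * p - c • p‖ ≤ ε) :
    ‖a * p‖ ^ 2 - ‖a * q‖ ^ 2 ≤ 2 * ε := by
  have hp_near : ‖a * p‖ ^ 2 ≤ ‖c‖ + ε :=
    calc ‖a * p‖ ^ 2 = ‖p * (star a * a) * p‖ := hp.isSelfAdjoint.norm_mul_sq a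
      _ ≤ ‖c • p‖ + ‖p * (star a * a) * p - c • p‖ := norm_le_norm_add_norm_sub' _ _
      _ ≤ ‖c‖ + ε := by
          rw [norm_smul]
          gcongr
          exact mul_le_of_le_one_right (norm_nonneg _) (hp.norm_le p)
  have hq_near : ‖c‖ - ε ≤ ‖a * q‖ ^ 2 :=
    calc ‖c‖ - ε = ‖c • q‖ - ε := by rw [norm_smul, hq.norm_eq_one hq0, mul_one]
      _ ≤ ‖c • q‖ - ‖q * (star a * a) * q - c • q‖ := by
          gcongr
          exact norm_compress_sub_smul_le hq hpq hqp h
      _ ≤ ‖q * (star a * a) * q‖ := by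
          linarith [norm_le_norm_add_norm_sub (q * (star a * a) * q) (c • q)]
      _ = ‖a * q‖ ^ 2 := (hq.isSelfAdjoint.norm_mul_sq a).symm
  linarith

end CStarRing

theorem ltqo_norm_comparison_general
    {E : Type*} [NormedAddCommGroup E] [InnerProductSpace ℂ E] [CompleteSpace E]
    (vol : ℕ → ℕ) (Ω : ℝ → ℝ)
    (P : ℕ → (E →L[ℂ] E)) (PΛ : E →L[ℂ] E)
    (hPsa : ∀ n, IsSelfAdjoint (P n)) (hPidem : ∀ n, P n * P n = P n)
    (hPΛsa : IsSelfAdjoint PΛ) (hPΛidem : PΛ * PΛ = PΛ) (hPΛne : PΛ ≠ 0)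
    (r k n : ℕ) (hkn : k ≤ n) (hnr : n ≤ r)
    (hFF : ∀ m, k ≤ m → m ≤ r → P m * PΛ = PΛ ∧ PΛ * P m = PΛ)
    (Alg : ℕ → StarSubalgebra ℂ (E →L[ℂ] E))
    (A : E →L[ℂ] E) (hA : A ∈ Alg k)
    (ω : (E →L[ℂ] E) → ℂ)
    (hLTQO : ∀ m n' : ℕ, m ≤ n' → n' ≤ r → ∀ B ∈ Alg m,
        ‖P n' * B * P n' - ω B • P n'‖ ≤ (vol m : ℝ) * ‖B‖ * Ω ((n' : ℝ) - (m : ℝ))) :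
    |‖A * P n‖ - ‖A * PΛ‖| ≤
      ‖A‖ * Real.sqrt (2 * (vol k : ℝ) * Ω ((n : ℝ) - (k : ℝ))) := by
  have hp : IsStarProjection (P n) := ⟨hPidem n, hPsa n⟩
  have hq : IsStarProjection PΛ := ⟨hPΛidem, hPΛsa⟩
  obtain ⟨hpq, hqp⟩ := hFF n hkn hnr
  have hLTQO_A := hLTQO k n hkn hnr (star A * A) (mul_mem (star_mem hA) hA)
  have hbound := abs_sub_le_sqrt_of_sq_sub_sq_le (norm_nonneg _)
    (norm_mul_le_norm_mul_of_mul_eq (hq.norm_le PΛ) hpq A)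
    (norm_mul_sq_sub_norm_mul_sq_le A hp hq hPΛne hpq hqp hLTQO_A)
  calc |‖A * P n‖ - ‖A * PΛ‖|
      ≤ √(2 * ((vol k : ℝ) * ‖star A * A‖ * Ω ((n : ℝ) - (k : ℝ)))) := hbound
    _ = √((‖A‖ * ‖A‖) * (2 * (vol k : ℝ) * Ω ((n : ℝ) - (k : ℝ)))) := by
        rw [CStarRing.norm_star_mul_self]
        ring_nf
    _ = ‖A‖ * √(2 * (vol k : ℝ) * Ω ((n : ℝ) - (k : ℝ))) := by
        rw [Real.sqrt_mul (mul_self_nonneg _), Real.sqrt_mul_self (norm_nonneg _)]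

/-- **Proposition 2.1** (consequence of LTQO / indistinguishability radius).
`P n` denote the frustration-free ground state projections of the balls `b_x(n)`,
`PΛ ≠ 0` the global ground state projection, `ω` the global ground state functional
`ω(B) = Tr[PΛ B]/Tr[PΛ]`, `Alg m` the local observable algebras of the balls `b_x(m)`,
and `Ω` a non-increasing nonnegative decay function.  If `x` has indistinguishability
radius `r`, then for `0 < k ≤ n ≤ r` and `A` supported in `b_x(k)`:
`|‖A P_{b_x(n)}‖ − ‖A P_Λ‖| ≤ ‖A‖ √(2 |b_x(k)| Ω(n−k))`. -/
theorem ltqo_norm_comparison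
    {E : Type*} [NormedAddCommGroup E] [InnerProductSpace ℂ E] [CompleteSpace E]
    [FiniteDimensional ℂ E]
    (vol : ℕ → ℕ) (Ω : ℝ → ℝ) (hΩ0 : ∀ t, 0 ≤ Ω t) (hΩanti : Antitone Ω)
    (P : ℕ → (E →L[ℂ] E)) (PΛ : E →L[ℂ] E)
    (hPsa : ∀ n, IsSelfAdjoint (P n)) (hPidem : ∀ n, P n * P n = P n)
    (hPΛsa : IsSelfAdjoint PΛ) (hPΛidem : PΛ * PΛ = PΛ) (hPΛne : PΛ ≠ 0)
    (r k n : ℕ) (hk0 : 0 < k) (hkn : k ≤ n) (hnr : n ≤ r)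
    (hFF : ∀ m, k ≤ m → m ≤ r → P m * PΛ = PΛ ∧ PΛ * P m = PΛ)
    (Alg : ℕ → StarSubalgebra ℂ (E →L[ℂ] E))
    (A : E →L[ℂ] E) (hA : A ∈ Alg k)
    (ω : (E →L[ℂ] E) → ℂ)
    (hω : ∀ B, ω B =
      LinearMap.trace ℂ E ((PΛ * B : E →L[ℂ] E) : E →ₗ[ℂ] E) /
        LinearMap.trace ℂ E ((PΛ : E →L[ℂ] E) : E →ₗ[ℂ] E))
    (hLTQO : ∀ m n' : ℕ, m ≤ n' → n' ≤ r → ∀ B ∈ Alg m,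
        ‖P n' * B * P n' - ω B • P n'‖ ≤ (vol m : ℝ) * ‖B‖ * Ω ((n' : ℝ) - (m : ℝ))) :
    |‖A * P n‖ - ‖A * PΛ‖| ≤
      ‖A‖ * Real.sqrt (2 * (vol k : ℝ) * Ω ((n : ℝ) - (k : ℝ))) :=
  ltqo_norm_comparison_general vol Ω P PΛ hPsa hPidem hPΛsa hPΛidem hPΛne r k n hkn hnr hFF Alg A hA
    ω hLTQO
end

section
/- Let F, G : [0,∞) → [0,∞) be summable functions on the nonnegative integers, with G non-increasing. Then for any R ≥ 0: Σ_{k≥0} G(k) Σ_{n ≥ max(R−k−1, 0)} F(n) ≤ min( ‖G‖·‖F‖, G(0)·⌊R/2⌋·Σ_{n ≥ ⌊R/2⌋} F(n) + ‖F‖·Σ_{n ≥ ⌊R/2⌋} G(n) ), where ‖F‖ = Σ_{n≥0} F(n) and ‖G‖ = Σ_{n≥0} G(n). -/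
/-!
Split the outer sum at `N = ⌊R/2⌋`. For `k < N` the inner tail starts at `R - k - 1 ≥ N`, so
those `N` terms are each at most `G 0 · ∑_{n ≥ N} F n`; for `k ≥ N` the inner tail is at most
`‖F‖`, leaving `‖F‖ · ∑_{k ≥ N} G k`. Bounding every inner tail by `‖F‖` gives `‖G‖ ‖F‖`.
-/

/-- The tail sum `∑_{n ≥ m} F n` of a function on the nonnegative integers. -/
noncomputable def tailSum (F : ℕ → ℝ) (m : ℕ) : ℝ :=
  ∑' n : ℕ, if m ≤ n then F n else 0

open Finset

section TailSum

variable {F : ℕ → ℝ}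

lemma summable_tail (hFs : Summable F) (m : ℕ) :
    Summable fun n => if m ≤ n then F n else 0 :=
  (hFs.indicator (Set.Ici m)).congr fun n => by simp [Set.indicator_apply]

lemma tailSum_eq_tsum_nat_add (hFs : Summable F) (m : ℕ) :
    tailSum F m = ∑' n, F (n + m) := by
  rw [tailSum, ← (summable_tail hFs m).sum_add_tsum_nat_add m,
    sum_eq_zero fun n hn => if_neg (not_le.2 (mem_range.1 hn))]
  simp

lemma tailSum_nonneg (hF0 : ∀ n, 0 ≤ F n) (m : ℕ) : 0 ≤ tailSum F m :=
  tsum_nonneg fun n => by split_ifs <;> simp [hF0 n]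

lemma tailSum_le_tsum (hF0 : ∀ n, 0 ≤ F n) (hFs : Summable F) (m : ℕ) :
    tailSum F m ≤ ∑' n, F n :=
  (summable_tail hFs m).tsum_le_tsum (fun n => by split_ifs <;> simp [hF0 n]) hFs

lemma tailSum_antitone (hF0 : ∀ n, 0 ≤ F n) (hFs : Summable F) : Antitone (tailSum F) :=
  fun m m' hmm' =>
  (summable_tail hFs m').tsum_le_tsum
    (fun n => by split_ifs <;> first | omega | simp [hF0 n]) (summable_tail hFs m)

end TailSum

section DoubleSum

variable {F G : ℕ → ℝ}

lemma summable_mul_tailSum (hF0 : ∀ n, 0 ≤ F n) (hG0 : ∀ n, 0 ≤ G n) (hFs : Summable F)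
    (hGs : Summable G) (a : ℕ → ℕ) : Summable fun k => G k * tailSum F (a k) :=
  (hGs.mul_right (∑' n, F n)).of_nonneg_of_le
    (fun k => mul_nonneg (hG0 k) (tailSum_nonneg hF0 _))
    (fun k => mul_le_mul_of_nonneg_left (tailSum_le_tsum hF0 hFs _) (hG0 k))

lemma tsum_mul_tailSum_le_mul_tsum (hF0 : ∀ n, 0 ≤ F n) (hG0 : ∀ n, 0 ≤ G n)
    (hFs : Summable F) (hGs : Summable G) (a : ℕ → ℕ) :
    ∑' k, G k * tailSum F (a k) ≤ (∑' n, G n) * ∑' n, F n := by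
  rw [← tsum_mul_right]
  exact (summable_mul_tailSum hF0 hG0 hFs hGs a).tsum_le_tsum
    (fun k => mul_le_mul_of_nonneg_left (tailSum_le_tsum hF0 hFs _) (hG0 k))
    (hGs.mul_right _)

lemma tsum_mul_tailSum_le_add_mul_tailSum (hF0 : ∀ n, 0 ≤ F n) (hG0 : ∀ n, 0 ≤ G n)
    (hFs : Summable F) (hGs : Summable G) (hGanti : Antitone G) {a : ℕ → ℕ} {N : ℕ}
    (ha : ∀ k < N, N ≤ a k) :
    ∑' k, G k * tailSum F (a k) ≤ G 0 * N * tailSum F N + (∑' n, F n) * tailSum G N := by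
  have hs := summable_mul_tailSum hF0 hG0 hFs hGs a
  rw [← hs.sum_add_tsum_nat_add N, tailSum_eq_tsum_nat_add hGs, ← tsum_mul_left]
  gcongr ?_ + ?_
  · calc ∑ k ∈ range N, G k * tailSum F (a k) ≤ ∑ _k ∈ range N, G 0 * tailSum F N :=
          sum_le_sum fun k hk => mul_le_mul (hGanti k.zero_le)
            (tailSum_antitone hF0 hFs (ha k (mem_range.1 hk))) (tailSum_nonneg hF0 _) (hG0 0)
      _ = G 0 * N * tailSum F N := by rw [sum_const, card_range, nsmul_eq_mul]; ring
  · exact ((summable_nat_add_iff N).2 hs).tsum_le_tsum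
      (fun k => (mul_le_mul_of_nonneg_left (tailSum_le_tsum hF0 hFs _) (hG0 _)).trans_eq
        (mul_comm _ _))
      (((summable_nat_add_iff N).2 hGs).mul_left _)

end DoubleSum

/-- **Lemma A.1**: a double-sum decay estimate.  For summable nonnegative `F`, `G`
with `G` non-increasing and any `R ≥ 0`,
`∑_k G(k) ∑_{n ≥ |R−k−1|₊} F(n)
  ≤ min(‖G‖‖F‖, G(0)·⌊R/2⌋·∑_{n ≥ ⌊R/2⌋} F(n) + ‖F‖·∑_{n ≥ ⌊R/2⌋} G(n))`. -/
theorem double_sum_decay_estimate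
    (F G : ℕ → ℝ) (hF0 : ∀ n, 0 ≤ F n) (hG0 : ∀ n, 0 ≤ G n)
    (hFs : Summable F) (hGs : Summable G)
    (hGanti : Antitone G) (R : ℕ) :
    ∑' k : ℕ, G k * tailSum F (R - k - 1) ≤
      min ((∑' n : ℕ, G n) * (∑' n : ℕ, F n))
        (G 0 * ((R / 2 : ℕ) : ℝ) * tailSum F (R / 2) +
          (∑' n : ℕ, F n) * tailSum G (R / 2)) :=
  le_min (tsum_mul_tailSum_le_mul_tsum hF0 hG0 hFs hGs _)
    (tsum_mul_tailSum_le_add_mul_tailSum hF0 hG0 hFs hGs hGanti fun k hk => by omega)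
end

section
/- Let Γ be a countable set with algebra of quasi-local observables A_Γ, Λ_n ↑ Γ an increasing absorbing sequence of finite volumes, and H_n = H_n* ∈ A_{Λ_n} Hamiltonians such that δ(A) = lim_n [H_n, A] exists for all local A, defining a derivation δ. Set E_n = min spec(H_n) and suppose there are sequences ε_n → 0 and γ_n with limsup γ_n > 0 such that the spectral projection P_n of H_n − E_n onto [0, ε_n] satisfies (1 − P_n)(H_n − E_n) ≥ γ_n (1 − P_n). If ω is a state on A_Γ and Q_n ≤ P_n are nonzero orthogonal projections with ‖P_n A Q_n − ω(A) Q_n‖ → 0 for all local A, then ω is a ground state of δ (i.e. ω(A*δ(A)) ≥ 0 for all local A), and moreover ω(A*δ(A)) ≥ (limsup_n γ_n)·ω(A*A) for all local A with ω(A) = 0. -/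
/-!
Write `K n = H n - E n ≥ 0`. For local `a` the compressions `(a Q n)⋆ K n (a Q n) ≥ 0` converge
in norm to `ω (a⋆ δ a) • Q n`: the commutator `[K n, a]` tends to `δ a`, `K n Q n = K n P n Q n`
is `O(ε n)`, and `Q n b Q n - ω b • Q n → 0` passes from local `b` to the limit `a⋆ δ a` because
these maps are equicontinuous in `b`. A positive element within `η` of `z • q`, for a nonzero
projection `q`, forces `-η ≤ re z` and `|im z| ≤ η`; hence `ω (a⋆ δ a) ≥ 0`.
If moreover `ω a = 0`, then `P n a Q n → 0`, so compressing the gap inequality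
`γ n (1 - P n) ≤ (1 - P n) K n` by `a Q n` gives `γ n ω (a⋆ a) Q n ≲ ω (a⋆ δ a) Q n`
up to errors tending to zero, and the limsup bound follows.
-/

open Filter Topology
open scoped ComplexOrder

lemma isClosed_setOf_tendsto_mul_mul_sub_smul {A : Type*} [NormedRing A] [NormedAlgebra ℂ A]
    {ι : Type*} {l : Filter ι} {Q : ι → A} (hQ : ∀ i, ‖Q i‖ ≤ 1) (ω : A →L[ℂ] ℂ) :
    IsClosed {b | Tendsto (fun i => Q i * b * Q i - ω b • Q i) l (𝓝 0)} := by
  refine Equicontinuous.isClosed_setOfPred_tendsto (f := fun _ => 0) ?_ continuous_const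
  refine (LipschitzWith.uniformEquicontinuous _ (1 + ‖ω‖₊) fun i =>
    LipschitzWith.of_dist_le_mul fun b c => ?_).equicontinuous
  have hdiff : (Q i * b * Q i - ω b • Q i) - (Q i * c * Q i - ω c • Q i)
      = Q i * (b - c) * Q i - ω (b - c) • Q i := by
    simp only [map_sub, mul_sub, sub_mul, sub_smul]; abel
  rw [dist_eq_norm, dist_eq_norm, hdiff]
  calc ‖Q i * (b - c) * Q i - ω (b - c) • Q i‖
      ≤ ‖Q i‖ * ‖b - c‖ * ‖Q i‖ + ‖ω‖ * ‖b - c‖ * ‖Q i‖ := by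
        refine (norm_sub_le _ _).trans (add_le_add norm_mul₃_le ?_)
        rw [norm_smul]
        gcongr
        exact ω.le_opNorm _
    _ ≤ 1 * ‖b - c‖ * 1 + ‖ω‖ * ‖b - c‖ * 1 := by gcongr <;> exact hQ i
    _ = (1 + ‖ω‖₊ : NNReal) * ‖b - c‖ := by push_cast; ring

section CStarRing

variable {A : Type*} [NormedRing A] [StarRing A] [CStarRing A] {ι : Type*} {l : Filter ι}

lemma IsStarProjection.norm_mul_mul_le {q : A} (hq : IsStarProjection q) (x : A) :
    ‖q * x * q‖ ≤ ‖x‖ :=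
  calc ‖q * x * q‖ ≤ ‖q‖ * ‖x‖ * ‖q‖ := norm_mul₃_le
    _ ≤ 1 * ‖x‖ * 1 := by gcongr <;> exact hq.norm_le
    _ = ‖x‖ := by ring

lemma IsStarProjection.norm_eq_one_s13 {q : A} (hq : IsStarProjection q) (hq0 : q ≠ 0) :
    ‖q‖ = 1 := by
  have h : ‖q‖ * ‖q‖ = ‖q‖ * 1 := by
    rw [← CStarRing.norm_star_mul_self, hq.isSelfAdjoint.star_eq, hq.isIdempotentElem.eq, mul_one]
  exact mul_left_cancel₀ (norm_ne_zero_iff.mpr hq0) h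

lemma tendsto_mul_mul_of_isStarProjection {Q x : ι → A} (hQ : ∀ i, IsStarProjection (Q i))
    (hx : Tendsto x l (𝓝 0)) : Tendsto (fun i => Q i * x i * Q i) l (𝓝 0) :=
  squeeze_zero_norm (fun i => (hQ i).norm_mul_mul_le _) (tendsto_zero_iff_norm_tendsto_zero.mp hx)

lemma IsStarProjection.abs_im_le_norm_smul_sub [NormedAlgebra ℂ A] [StarModule ℂ A] {q : A}
    (hq : IsStarProjection q) (hq0 : q ≠ 0) {y : A}
    (hy : IsSelfAdjoint y) (z : ℂ) : |z.im| ≤ ‖z • q - y‖ := by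
  have him : (z - star z) • q = (z • q - y) - star (z • q - y) := by
    rw [star_sub, star_smul, hq.isSelfAdjoint.star_eq, hy.star_eq, sub_smul]
    abel
  have hnorm : ‖(z - star z) • q‖ = 2 * |z.im| := by
    rw [norm_smul, hq.norm_eq_one_s13 hq0, mul_one, Complex.star_def, Complex.sub_conj]
    simp
  have := norm_sub_le (z • q - y) (star (z • q - y))
  rw [norm_star, ← him, hnorm] at this
  linarith

lemma tendsto_mul_mul_sub_smul_of_tendsto_norm [NormedAlgebra ℂ A] {P Q : ι → A} {b : A} {z : ℂ}
    (hQ : ∀ i, IsStarProjection (Q i)) (hQP : ∀ i, Q i * P i = Q i)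
    (h : Tendsto (fun i => ‖P i * b * Q i - z • Q i‖) l (𝓝 0)) :
    Tendsto (fun i => Q i * b * Q i - z • Q i) l (𝓝 0) := by
  refine (isBoundedUnder_le_mul_tendsto_zero (isBoundedUnder_of ⟨1, fun i => (hQ i).norm_le⟩)
    (tendsto_zero_iff_norm_tendsto_zero.mpr h)).congr fun i => ?_
  rw [mul_sub, mul_smul_comm, (hQ i).isIdempotentElem.eq, ← mul_assoc, ← mul_assoc, hQP i]

lemma tendsto_star_mul_mul_sub_smul [NormedAlgebra ℂ A] {K P Q : ι → A} {a d : A} {z : ℂ}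
    (hQ : ∀ i, IsStarProjection (Q i)) (hPQ : ∀ i, P i * Q i = Q i)
    (hKP : Tendsto (fun i => K i * P i) l (𝓝 0))
    (hd : Tendsto (fun i => K i * a - a * K i) l (𝓝 d))
    (hz : Tendsto (fun i => Q i * (star a * d) * Q i - z • Q i) l (𝓝 0)) :
    Tendsto (fun i => star (a * Q i) * K i * (a * Q i) - z • Q i) l (𝓝 0) := by
  have hcomm : Tendsto (fun i => Q i * (star a * (K i * a - a * K i - d)) * Q i) l (𝓝 0) :=
    tendsto_mul_mul_of_isStarProjection hQ <| by
      simpa using (hd.sub_const d).const_mul (star a)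
  have hKQ : Tendsto (fun i => K i * Q i) l (𝓝 0) := by
    refine (hKP.zero_mul_isBoundedUnder_le
      (isBoundedUnder_of ⟨1, fun i => (hQ i).norm_le⟩)).congr fun i => ?_
    rw [mul_assoc, hPQ i]
  have hKQterm : Tendsto (fun i => Q i * (star a * a) * (K i * Q i)) l (𝓝 0) :=
    isBoundedUnder_le_mul_tendsto_zero
      (isBoundedUnder_of ⟨‖star a * a‖, fun i => (norm_mul_le _ _).trans
        (mul_le_of_le_one_left (norm_nonneg _) (hQ i).norm_le)⟩) hKQ
  have hsum := (hcomm.add hz).add hKQterm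
  rw [add_zero, add_zero] at hsum
  refine hsum.congr fun i => ?_
  simp only [star_mul, (hQ i).isSelfAdjoint.star_eq, mul_sub, sub_mul, mul_assoc]
  abel

end CStarRing

lemma limsup_mul_le_of_mul_sub_le {ι : Type*} {l : Filter ι} [l.NeBot] {γ u v : ι → ℝ}
    (hγ : ∀ i, 0 ≤ γ i) {t r : ℝ} (ht : 0 < t) (hu : Tendsto u l (𝓝 0))
    (hv : Tendsto v l (𝓝 0)) (h : ∀ i, γ i * (t - u i) ≤ r + v i) : limsup γ l * t ≤ r := by
  have hlim : Tendsto (fun i => (r + v i) / (t - u i)) l (𝓝 (r / t)) := by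
    simpa [Pi.div_def] using (tendsto_const_nhds.add hv).div (tendsto_const_nhds.sub hu)
      (by simpa using ht.ne')
  have hev : ∀ᶠ i in l, γ i ≤ (r + v i) / (t - u i) := by
    filter_upwards [hu.eventually (gt_mem_nhds ht)] with i hi
    exact (le_div_iff₀ (sub_pos.mpr hi)).mpr (h i)
  have hle := limsup_le_limsup hev (isBoundedUnder_of ⟨0, hγ⟩).isCoboundedUnder_le
    hlim.isBoundedUnder_le
  rw [hlim.limsup_eq] at hle
  exact (le_div_iff₀ ht).mp hle

section CStarAlgebra

variable {A : Type*} [CStarAlgebra A] [PartialOrder A] [StarOrderedRing A] {q : A}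

lemma IsStarProjection.neg_norm_smul_sub_le (hq : IsStarProjection q) (hq0 : q ≠ 0) {y : A}
    (hy : 0 ≤ y) (s : ℝ) : -‖(s : ℂ) • q - y‖ ≤ s := by
  -- `s • q = y + m ≥ -‖m‖`, and compressing by `q` turns this into `(s + ‖m‖) • q ≥ 0`.
  set m := (s : ℂ) • q - y
  have hm : IsSelfAdjoint m :=
    (IsSelfAdjoint.smul (Complex.conj_ofReal s) hq.isSelfAdjoint).sub hy.isSelfAdjoint
  have hshift : 0 ≤ (s : ℂ) • q + algebraMap ℝ A ‖m‖ := by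
    have hm' := sub_nonneg.mpr hm.neg_algebraMap_norm_le_self
    rw [sub_neg_eq_add] at hm'
    have : (s : ℂ) • q + algebraMap ℝ A ‖m‖ = y + (m + algebraMap ℝ A ‖m‖) := by
      simp only [m]; abel
    exact this ▸ add_nonneg hy hm'
  have hcorner : q * ((s : ℂ) • q + algebraMap ℝ A ‖m‖) * q = ((s + ‖m‖ : ℝ) : ℂ) • q := by
    simp [Algebra.algebraMap_eq_smul_one, mul_add, add_mul, hq.isIdempotentElem.eq, add_smul]
  have hpos : 0 ≤ ((s + ‖m‖ : ℝ) : ℂ) • q := hcorner ▸ hq.isSelfAdjoint.conjugate_nonneg hshift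
  by_contra! hlt
  have hneg : ((s + ‖m‖ : ℝ) : ℂ) < 0 := by exact_mod_cast (by linarith : s + ‖m‖ < 0)
  have := smul_nonneg (inv_nonneg.mpr (neg_nonneg.mpr hneg.le)) hpos
  rw [smul_smul, show (-((s + ‖m‖ : ℝ) : ℂ))⁻¹ * ((s + ‖m‖ : ℝ) : ℂ) = -1 by
    rw [inv_neg, neg_mul, inv_mul_cancel₀ hneg.ne], neg_one_smul, neg_nonneg] at this
  exact hq0 (le_antisymm this hq.nonneg)

lemma IsStarProjection.neg_norm_smul_sub_le_re (hq : IsStarProjection q) (hq0 : q ≠ 0) {y : A}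
    (hy : 0 ≤ y) (z : ℂ) : -‖z • q - y‖ ≤ z.re := by
  have hre : (z.re : ℂ) • q - y = (2⁻¹ : ℂ) • ((z • q - y) + star (z • q - y)) := by
    rw [star_sub, star_smul, hq.isSelfAdjoint.star_eq, hy.isSelfAdjoint.star_eq,
      Complex.star_def, Complex.re_eq_add_conj]
    module
  have hnorm : ‖(z.re : ℂ) • q - y‖ ≤ ‖z • q - y‖ := by
    rw [hre, norm_smul, norm_inv, Complex.norm_two]
    have := norm_add_le (z • q - y) (star (z • q - y))
    rw [norm_star] at this
    linarith
  linarith [hq.neg_norm_smul_sub_le hq0 hy z.re]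

lemma nonneg_of_tendsto_sub_smul {ι : Type*} {l : Filter ι} [l.NeBot] {Q y : ι → A}
    (hQ : ∀ i, IsStarProjection (Q i)) (hQ0 : ∀ i, Q i ≠ 0) (hy : ∀ i, 0 ≤ y i) {z : ℂ}
    (h : Tendsto (fun i => y i - z • Q i) l (𝓝 0)) : 0 ≤ z := by
  have hnorm : Tendsto (fun i => ‖z • Q i - y i‖) l (𝓝 0) := by
    simpa [norm_sub_rev] using h.norm
  refine Complex.nonneg_iff.mpr ⟨le_of_tendsto' (by simpa using hnorm.neg) fun i =>
    (hQ i).neg_norm_smul_sub_le_re (hQ0 i) (hy i) z, ?_⟩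
  have him := ge_of_tendsto' hnorm fun i =>
    (hQ i).abs_im_le_norm_smul_sub (hQ0 i) (hy i).isSelfAdjoint z
  exact (abs_nonpos_iff.mp him).symm

lemma IsStarProjection.mul_sub_norm_le_add_norm (hq : IsStarProjection q) (hq0 : q ≠ 0)
    {x y : A} {γ : ℝ} (hγ : 0 ≤ γ) (hxy : (γ : ℂ) • x ≤ y) (t r : ℝ) :
    γ * (t - ‖x - (t : ℂ) • q‖) ≤ r + ‖y - (r : ℂ) • q‖ := by
  have hsplit : ((r - γ * t : ℝ) : ℂ) • q - (y - (γ : ℂ) • x)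
      = (γ : ℂ) • (x - (t : ℂ) • q) - (y - (r : ℂ) • q) := by
    push_cast; module
  have hnorm : ‖((r - γ * t : ℝ) : ℂ) • q - (y - (γ : ℂ) • x)‖
      ≤ γ * ‖x - (t : ℂ) • q‖ + ‖y - (r : ℂ) • q‖ := by
    rw [hsplit]
    refine (norm_sub_le _ _).trans_eq ?_
    rw [norm_smul, Complex.norm_real, Real.norm_of_nonneg hγ]
  have := hq.neg_norm_smul_sub_le hq0 (sub_nonneg.mpr hxy) (r - γ * t)
  linarith

end CStarAlgebra

lemma limsup_mul_le_of_gap {A : Type*} [CStarAlgebra A] [PartialOrder A] [StarOrderedRing A]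
    {K P Q : ℕ → A} {γ : ℕ → ℝ} {a : A} {t r : ℝ}
    (hQ : ∀ n, IsStarProjection (Q n)) (hQ0 : ∀ n, Q n ≠ 0) (hγ0 : ∀ n, 0 ≤ γ n)
    (hKP : Tendsto (fun n => K n * P n) atTop (𝓝 0)) (hcomm : ∀ n, Commute (K n) (P n))
    (hgap : ∀ n, (γ n : ℂ) • (1 - P n) ≤ (1 - P n) * K n)
    (hPa : Tendsto (fun n => P n * (a * Q n)) atTop (𝓝 0)) (ht : 0 < t)
    (hat : Tendsto (fun n => star (a * Q n) * (a * Q n) - (t : ℂ) • Q n) atTop (𝓝 0))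
    (har : Tendsto (fun n => star (a * Q n) * K n * (a * Q n) - (r : ℂ) • Q n) atTop (𝓝 0)) :
    limsup γ atTop * t ≤ r := by
  have hbdd : IsBoundedUnder (· ≤ ·) atTop (norm ∘ fun n => a * Q n) :=
    isBoundedUnder_of ⟨‖a‖, fun n => (norm_mul_le _ _).trans
      (mul_le_of_le_one_right (norm_nonneg _) (hQ n).norm_le)⟩
  have hbdd' : IsBoundedUnder (· ≤ ·) atTop (norm ∘ fun n => star (a * Q n)) := by
    simpa only [Function.comp_def, norm_star] using hbdd
  have hx : Tendsto (fun n => star (a * Q n) * (1 - P n) * (a * Q n) - (t : ℂ) • Q n)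
      atTop (𝓝 0) := by
    have h := hat.sub (isBoundedUnder_le_mul_tendsto_zero hbdd' hPa)
    rw [sub_zero] at h
    refine h.congr fun n => ?_
    simp only [mul_sub, sub_mul, mul_one, mul_assoc]
    abel
  have hy : Tendsto (fun n => star (a * Q n) * ((1 - P n) * K n) * (a * Q n) - (r : ℂ) • Q n)
      atTop (𝓝 0) := by
    have h := har.sub ((isBoundedUnder_le_mul_tendsto_zero hbdd' hKP).zero_mul_isBoundedUnder_le
      hbdd)
    rw [sub_zero] at h
    refine h.congr fun n => ?_
    rw [sub_mul, one_mul, ← (hcomm n).eq]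
    simp only [mul_sub, sub_mul, mul_assoc]
    abel
  refine limsup_mul_le_of_mul_sub_le hγ0 ht (tendsto_zero_iff_norm_tendsto_zero.mp hx)
    (tendsto_zero_iff_norm_tendsto_zero.mp hy) fun n =>
      (hQ n).mul_sub_norm_le_add_norm (hQ0 n) (hγ0 n) ?_ t r
  simpa only [mul_smul_comm, smul_mul_assoc] using
    star_left_conjugate_le_conjugate (hgap n) (a * Q n)

lemma limsup_mul_re_le_re_of_gap {A : Type*} [CStarAlgebra A] [PartialOrder A]
    [StarOrderedRing A] {K P Q : ℕ → A} {γ : ℕ → ℝ} {a : A} {w z : ℂ}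
    (hQ : ∀ n, IsStarProjection (Q n)) (hQ0 : ∀ n, Q n ≠ 0) (hγ0 : ∀ n, 0 ≤ γ n)
    (hK : ∀ n, 0 ≤ K n) (hKP : Tendsto (fun n => K n * P n) atTop (𝓝 0))
    (hcomm : ∀ n, Commute (K n) (P n)) (hgap : ∀ n, (γ n : ℂ) • (1 - P n) ≤ (1 - P n) * K n)
    (hPa : Tendsto (fun n => P n * (a * Q n)) atTop (𝓝 0))
    (hw : Tendsto (fun n => star (a * Q n) * (a * Q n) - w • Q n) atTop (𝓝 0))
    (hz : Tendsto (fun n => star (a * Q n) * K n * (a * Q n) - z • Q n) atTop (𝓝 0)) :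
    limsup γ atTop * w.re ≤ z.re := by
  have hw0 := nonneg_of_tendsto_sub_smul hQ hQ0 (fun n => star_mul_self_nonneg _) hw
  have hz0 := nonneg_of_tendsto_sub_smul hQ hQ0 (fun n => star_left_conjugate_nonneg (hK n) _) hz
  rcases (Complex.nonneg_iff.mp hw0).1.eq_or_lt with hre | hpos
  · rw [← hre, mul_zero]
    exact (Complex.nonneg_iff.mp hz0).1
  rw [Complex.eq_re_of_ofReal_le (z := w) (by exact_mod_cast hw0)] at hw
  rw [Complex.eq_re_of_ofReal_le (z := z) (by exact_mod_cast hz0)] at hz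
  exact limsup_mul_le_of_gap hQ hQ0 hγ0 hKP hcomm hgap hPa hpos hw hz

theorem gns_gap_in_thermodynamic_limit_general
    {A : Type*} [NormedRing A] [StarRing A] [CStarRing A] [CompleteSpace A]
    [NormedAlgebra ℂ A] [StarModule ℂ A] [PartialOrder A] [StarOrderedRing A]
    (L : ℕ → StarSubalgebra ℂ A) (hL : Monotone L)
    (H P Q : ℕ → A) (E γ ε : ℕ → ℝ)
    (hHloc : ∀ n, H n ∈ L n)
    (hE : ∀ n, 0 ≤ H n - (E n : ℂ) • (1 : A))
    (hε : Tendsto ε atTop (nhds 0))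
    (hγ0 : ∀ n, 0 ≤ γ n)
    (hPcomm : ∀ n, Commute (H n) (P n))
    (hPspec : ∀ n, ‖(H n - (E n : ℂ) • (1 : A)) * P n‖ ≤ ε n)
    (hgap : ∀ n, (γ n : ℂ) • ((1 : A) - P n) ≤
      ((1 : A) - P n) * (H n - (E n : ℂ) • (1 : A)))
    (δ : A → A)
    (hδ : ∀ a : A, (∃ n, a ∈ L n) →
      Tendsto (fun n => H n * a - a * H n) atTop (nhds (δ a)))
    (ω : A →L[ℂ] ℂ)
    (hQsa : ∀ n, IsSelfAdjoint (Q n)) (hQidem : ∀ n, Q n * Q n = Q n)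
    (hQne : ∀ n, Q n ≠ 0)
    (hQP : ∀ n, Q n * P n = Q n ∧ P n * Q n = Q n)
    (hconv : ∀ a : A, (∃ n, a ∈ L n) →
      Tendsto (fun n => ‖P n * a * Q n - ω a • Q n‖) atTop (nhds 0)) :
    (∀ a : A, (∃ n, a ∈ L n) →
        0 ≤ (ω (star a * δ a)).re ∧ (ω (star a * δ a)).im = 0) ∧
      (∀ a : A, (∃ n, a ∈ L n) → ω a = 0 →
        (limsup γ atTop) * (ω (star a * a)).re ≤ (ω (star a * δ a)).re) := by
  let _ : CStarAlgebra A := { ‹NormedRing A›, ‹StarRing A›, ‹CStarRing A›, ‹CompleteSpace A›,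
    ‹NormedAlgebra ℂ A›, ‹StarModule ℂ A› with }
  set K : ℕ → A := fun n => H n - (E n : ℂ) • 1
  have hlocal : ∀ a, (∃ n, a ∈ L n) ↔ a ∈ ⨆ n, L n := fun a => by
    rw [← SetLike.mem_coe, StarSubalgebra.coe_iSup_of_directed hL.directed_le, Set.mem_iUnion]
    rfl
  simp only [hlocal] at hδ hconv ⊢
  have hH : ∀ n, H n ∈ ⨆ n, L n := fun n => (hlocal _).mp ⟨n, hHloc n⟩
  have hQ : ∀ n, IsStarProjection (Q n) := fun n => ⟨hQidem n, hQsa n⟩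
  have hKP : Tendsto (fun n => K n * P n) atTop (𝓝 0) := squeeze_zero_norm hPspec hε
  have hcompress : ∀ b ∈ ⨆ n, L n, Tendsto (fun n => Q n * b * Q n - ω b • Q n) atTop (𝓝 0) :=
    fun b hb => tendsto_mul_mul_sub_smul_of_tendsto_norm hQ (fun n => (hQP n).1) (hconv b hb)
  have henergy : ∀ a ∈ ⨆ n, L n, Tendsto
      (fun n => star (a * Q n) * K n * (a * Q n) - ω (star a * δ a) • Q n) atTop (𝓝 0) := by
    intro a ha
    have hKa : ∀ n, H n * a - a * H n = K n * a - a * K n := fun n => by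
      simp only [K, sub_mul, mul_sub, smul_mul_assoc, mul_smul_comm, one_mul, mul_one,
        sub_sub_sub_cancel_right]
    refine tendsto_star_mul_mul_sub_smul hQ (fun n => (hQP n).2) hKP
      ((hδ a ha).congr hKa) ?_
    exact (isClosed_setOf_tendsto_mul_mul_sub_smul (fun n => (hQ n).norm_le) ω).mem_of_tendsto
      ((hδ a ha).const_mul (star a)) (Eventually.of_forall fun m => hcompress _
        (mul_mem (star_mem ha) (sub_mem (mul_mem (hH m) ha) (mul_mem ha (hH m)))))
  refine ⟨fun a ha => ?_, fun a ha hωa => ?_⟩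
  · obtain ⟨hre, him⟩ := Complex.nonneg_iff.mp <| nonneg_of_tendsto_sub_smul hQ hQne
      (fun n => star_left_conjugate_nonneg (hE n) _) (henergy a ha)
    exact ⟨hre, him.symm⟩
  refine limsup_mul_re_le_re_of_gap hQ hQne hγ0 hE hKP
    (fun n => (hPcomm n).sub_left ((Commute.one_left _).smul_left _)) hgap ?_ ?_ (henergy a ha)
  · simpa [hωa, mul_assoc] using tendsto_zero_iff_norm_tendsto_zero.mpr (hconv a ha)
  · refine (hcompress _ (mul_mem (star_mem ha) ha)).congr fun n => ?_
    simp only [star_mul, (hQsa n).star_eq, mul_assoc]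

/-- **Theorem 7.5** (spectral gap of the GNS Hamiltonian, abstract form).
`A` is a unital C*-algebra with an increasing family `L n` of (local) C*-subalgebras,
`H n ∈ L n` self-adjoint Hamiltonians with ground state energies `E n`, spectral
projections `P n` of `H n − E n` onto `[0, ε n]` with `ε n → 0`, gap inequality
`(1 − P n)(H n − E n) ≥ γ n (1 − P n)` with `limsup γ n > 0`, and `δ` the derivation
`δ a = lim_n [H n, a]` on local elements.  If `ω` is a state and `Q n ≤ P n` are
nonzero orthogonal projections with `‖P n · a · Q n − ω(a) Q n‖ → 0` for all local `a`,
then `ω` is a ground state of `δ` and satisfies the gap inequality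
`ω(a* δ(a)) ≥ (limsup γ) ω(a* a)` for local `a` with `ω a = 0`. -/
theorem gns_gap_in_thermodynamic_limit
    {A : Type*} [NormedRing A] [StarRing A] [CStarRing A] [CompleteSpace A]
    [NormedAlgebra ℂ A] [StarModule ℂ A] [PartialOrder A] [StarOrderedRing A]
    (L : ℕ → StarSubalgebra ℂ A) (hL : Monotone L)
    (H P Q : ℕ → A) (E γ ε : ℕ → ℝ)
    (hHloc : ∀ n, H n ∈ L n) (hHsa : ∀ n, IsSelfAdjoint (H n))
    (hE : ∀ n, 0 ≤ H n - (E n : ℂ) • (1 : A))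
    (hε0 : ∀ n, 0 ≤ ε n) (hε : Tendsto ε atTop (nhds 0))
    (hγ0 : ∀ n, 0 ≤ γ n) (hγbdd : BddAbove (Set.range γ))
    (hγ : 0 < limsup γ atTop)
    (hPsa : ∀ n, IsSelfAdjoint (P n)) (hPidem : ∀ n, P n * P n = P n)
    (hPloc : ∀ n, P n ∈ L n) (hPcomm : ∀ n, Commute (H n) (P n))
    (hPspec : ∀ n, ‖(H n - (E n : ℂ) • (1 : A)) * P n‖ ≤ ε n)
    (hgap : ∀ n, (γ n : ℂ) • ((1 : A) - P n) ≤
      ((1 : A) - P n) * (H n - (E n : ℂ) • (1 : A)))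
    (δ : A → A)
    (hδ : ∀ a : A, (∃ n, a ∈ L n) →
      Tendsto (fun n => H n * a - a * H n) atTop (nhds (δ a)))
    (ω : A →L[ℂ] ℂ) (hω1 : ω 1 = 1)
    (hωpos : ∀ a : A, 0 ≤ (ω (star a * a)).re ∧ (ω (star a * a)).im = 0)
    (hQsa : ∀ n, IsSelfAdjoint (Q n)) (hQidem : ∀ n, Q n * Q n = Q n)
    (hQne : ∀ n, Q n ≠ 0) (hQloc : ∀ n, Q n ∈ L n)
    (hQP : ∀ n, Q n * P n = Q n ∧ P n * Q n = Q n)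
    (hconv : ∀ a : A, (∃ n, a ∈ L n) →
      Tendsto (fun n => ‖P n * a * Q n - ω a • Q n‖) atTop (nhds 0)) :
    (∀ a : A, (∃ n, a ∈ L n) →
        0 ≤ (ω (star a * δ a)).re ∧ (ω (star a * δ a)).im = 0) ∧
      (∀ a : A, (∃ n, a ∈ L n) → ω a = 0 →
        (limsup γ atTop) * (ω (star a * a)).re ≤ (ω (star a * δ a)).re) :=
  gns_gap_in_thermodynamic_limit_general L hL H P Q E γ ε hHloc hE hε hγ0 hPcomm hPspec hgap δ hδ ω
    hQsa hQidem hQne hQP hconv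
end

section
/- Let 𝔼 : M_k → M_k be a primitive, unital completely positive transfer map with 𝔼(B) = Σ_i v_i* B v_i, 𝔼(1) = 1, invariant faithful density matrix ρ (𝔼^t(ρ) = ρ), and ‖𝔼ⁿ − 𝔼^∞‖ ≤ c λⁿ where 𝔼^∞(B) = Tr(ρB)·1 and λ ∈ [0,1). For the MPS vectors Γ_{[l,r]}(B) = Σ Tr(B v_{i_l}⋯v_{i_r}) |i_l…i_r⟩ the bound |⟨Γ_{[l,r]}(B), Γ_{[l,r]}(C)⟩ − Tr(ρ B* C)| ≤ c Tr(ρ⁻¹) λ^{r−l+1} ‖B‖_ρ ‖C‖_ρ holds, where ‖B‖_ρ² = Tr(ρ B*B). In particular, (1 − c Tr(ρ⁻¹) λ^{r−l+1}) ‖B‖_ρ² ≤ ‖Γ_{[l,r]}(B)‖² ≤ (1 + c Tr(ρ⁻¹) λ^{r−l+1}) ‖B‖_ρ², so Γ_{[l,r]} is injective once c Tr(ρ⁻¹) λ^{r−l+1} < 1. -/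
/-!
Expand both traces in an orthonormal basis `u` of `ℂᵏ`. Summing over the words `v_{i_1} ⋯ v_{i_L}`
turns `⟨Γ(B), Γ(C)⟩` into `∑_{a,b} ⟨B u_a, 𝔼^L(|u_a⟩⟨u_b|) C u_b⟩`, and the same expansion with
`𝔼^∞(X) = Tr(ρX)·1` in place of `𝔼^L` gives `Tr(ρ B* C)`. Each `|u_a⟩⟨u_b|` has operator norm one,
so the difference is at most `c λ^L (∑_a ‖B u_a‖)(∑_b ‖C u_b‖)`. For an eigenbasis `u` of `ρ` with
eigenvalues `w_a > 0`, Cauchy–Schwarz gives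
`∑_a ‖B u_a‖ ≤ (∑_a w_a⁻¹)^{1/2} (∑_a w_a ‖B u_a‖²)^{1/2} = Tr(ρ⁻¹)^{1/2} ‖B‖_ρ`.
The norm bounds are the case `B = C`, and injectivity holds because `‖·‖_ρ` is definite when `ρ` is
faithful.
-/

open scoped ComplexOrder Matrix

/-- The matrix product state vector `Γ_{[l,r]}(B)` on a chain of `L = r − l + 1` sites,
with entries `⟨i_1…i_L | Γ(B)⟩ = Tr(B v_{i_1} ⋯ v_{i_L})`. -/
noncomputable def mpsVec {d k : ℕ} (v : Fin d → Matrix (Fin k) (Fin k) ℂ) (L : ℕ)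
    (B : Matrix (Fin k) (Fin k) ℂ) : EuclideanSpace ℂ (Fin L → Fin d) :=
  (WithLp.equiv 2 _).symm fun i => (B * (List.ofFn fun j => v (i j)).prod).trace

/-- The iterated transfer operator `𝔼ⁿ(B)`, with `𝔼(B) = ∑ i, v_i* B v_i`. -/
noncomputable def transferIter {d k : ℕ} (v : Fin d → Matrix (Fin k) (Fin k) ℂ) (n : ℕ)
    (B : Matrix (Fin k) (Fin k) ℂ) : Matrix (Fin k) (Fin k) ℂ :=
  (fun B => ∑ i, (v i)ᴴ * B * v i)^[n] B

/-- The `ρ`-weighted norm `‖B‖_ρ = √(Tr(ρ B* B))` on matrices. -/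
noncomputable def rhoNorm {k : ℕ} (ρ B : Matrix (Fin k) (Fin k) ℂ) : ℝ :=
  Real.sqrt ((ρ * Bᴴ * B).trace.re)

/-- The operator norm of a matrix, acting on Euclidean space. -/
noncomputable def matOpNorm {k : ℕ} (B : Matrix (Fin k) (Fin k) ℂ) : ℝ :=
  ‖LinearMap.toContinuousLinearMap (Matrix.toEuclideanLin B)‖

open InnerProductSpace
open scoped InnerProductSpace

theorem Finset.sum_le_sqrt_sum_inv_mul_sqrt_sum_mul_sq {ι : Type*} (s : Finset ι) {w x : ι → ℝ}
    (hw : ∀ i, 0 < w i) (hx : ∀ i, 0 ≤ x i) :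
    ∑ i ∈ s, x i ≤ √(∑ i ∈ s, (w i)⁻¹) * √(∑ i ∈ s, w i * x i ^ 2) := by
  refine le_of_eq_of_le (Finset.sum_congr rfl fun i _ => ?_)
    (Real.sum_sqrt_mul_sqrt_le s (fun i => (inv_pos.2 (hw i)).le)
      fun i => mul_nonneg (hw i).le (sq_nonneg (x i)))
  rw [← Real.sqrt_mul (inv_pos.2 (hw i)).le, inv_mul_cancel_left₀ (hw i).ne', Real.sqrt_sq (hx i)]

theorem norm_sum_sum_inner_le {𝕜 E ι κ : Type*} [RCLike 𝕜] [NormedAddCommGroup E]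
    [InnerProductSpace 𝕜 E] (s : Finset ι) (t : Finset κ) (x : ι → E) (y : κ → E)
    (T : ι → κ → E →L[𝕜] E) {ε : ℝ} (hT : ∀ a b, ‖T a b‖ ≤ ε) :
    ‖∑ a ∈ s, ∑ b ∈ t, ⟪x a, T a b (y b)⟫_𝕜‖ ≤ ε * (∑ a ∈ s, ‖x a‖) * ∑ b ∈ t, ‖y b‖ := by
  rw [mul_assoc, Finset.sum_mul_sum, Finset.mul_sum]
  refine (norm_sum_le _ _).trans (Finset.sum_le_sum fun a _ => ?_)
  rw [Finset.mul_sum]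
  refine (norm_sum_le _ _).trans (Finset.sum_le_sum fun b _ => ?_)
  calc ‖⟪x a, T a b (y b)⟫_𝕜‖ ≤ ‖x a‖ * (‖T a b‖ * ‖y b‖) :=
        (norm_inner_le_norm _ _).trans
          (mul_le_mul_of_nonneg_left ((T a b).le_opNorm _) (norm_nonneg _))
    _ ≤ ‖x a‖ * (ε * ‖y b‖) := by gcongr; exact hT a b
    _ = ε * (‖x a‖ * ‖y b‖) := by ring

namespace Matrix

variable {𝕜 n ι : Type*} [RCLike 𝕜] [Fintype n] [DecidableEq n] [Fintype ι]
  {A : Matrix n n 𝕜}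

local notation "𝕋" => toEuclideanCLM (n := n) (𝕜 := 𝕜)

theorem trace_eq_trace_toEuclideanCLM (M : Matrix n n 𝕜) :
    M.trace = LinearMap.trace 𝕜 _ (𝕋 M : EuclideanSpace 𝕜 n →ₗ[𝕜] EuclideanSpace 𝕜 n) := by
  rw [← trace_toLin_eq M (PiLp.basisFun 2 𝕜 n), ← toLpLin_eq_toLin]
  rfl

theorem trace_eq_sum_inner (M : Matrix n n 𝕜) (u : OrthonormalBasis ι 𝕜 (EuclideanSpace 𝕜 n)) :
    M.trace = ∑ i, ⟪u i, 𝕋 M (u i)⟫_𝕜 := by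
  rw [trace_eq_trace_toEuclideanCLM, LinearMap.trace_eq_sum_inner _ u]
  rfl

noncomputable def ketBra (x y : EuclideanSpace 𝕜 n) : Matrix n n 𝕜 :=
  (𝕋).symm (rankOne 𝕜 x y)

theorem toEuclideanCLM_ketBra (x y : EuclideanSpace 𝕜 n) :
    𝕋 (ketBra x y) = rankOne 𝕜 x y :=
  StarAlgEquiv.apply_symm_apply _ _

theorem trace_mul_ketBra (M : Matrix n n 𝕜) (x y : EuclideanSpace 𝕜 n) :
    (M * ketBra x y).trace = ⟪y, 𝕋 M x⟫_𝕜 := by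
  rw [trace_eq_trace_toEuclideanCLM, map_mul, toEuclideanCLM_ketBra, ContinuousLinearMap.mul_def,
    InnerProductSpace.comp_rankOne, trace_rankOne]

theorem toEuclideanCLM_conjTranspose (M : Matrix n n 𝕜) :
    𝕋 Mᴴ = ContinuousLinearMap.adjoint (𝕋 M) := by
  rw [← star_eq_conjTranspose, map_star, ContinuousLinearMap.star_eq_adjoint]

theorem star_trace_mul_mul_trace_mul (u : OrthonormalBasis ι 𝕜 (EuclideanSpace 𝕜 n))
    (B C W : Matrix n n 𝕜) :
    star (B * W).trace * (C * W).trace =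
      ∑ a, ∑ b, ⟪𝕋 B (u a), 𝕋 (Wᴴ * ketBra (u a) (u b) * W) (𝕋 C (u b))⟫_𝕜 := by
  rw [trace_mul_comm B, trace_mul_comm C, trace_eq_sum_inner _ u, trace_eq_sum_inner (W * C) u,
    star_sum, Finset.sum_mul_sum]
  refine Finset.sum_congr rfl fun a _ => Finset.sum_congr rfl fun b _ => ?_
  simp only [map_mul, mul_apply_eq_comp, toEuclideanCLM_ketBra, rankOne_apply, map_smul,
    inner_smul_right, toEuclideanCLM_conjTranspose, ContinuousLinearMap.adjoint_inner_right]
  rw [RCLike.star_def, inner_conj_symm, mul_comm]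

theorem trace_mul_conjTranspose_mul_eq_sum (u : OrthonormalBasis ι 𝕜 (EuclideanSpace 𝕜 n))
    (M B C : Matrix n n 𝕜) :
    (M * Bᴴ * C).trace = ∑ a, ∑ b, (M * ketBra (u a) (u b)).trace * ⟪𝕋 B (u a), 𝕋 C (u b)⟫_𝕜 := by
  rw [Finset.sum_comm, trace_eq_sum_inner _ u]
  refine Finset.sum_congr rfl fun b _ => ?_
  have hX := u.sum_repr' (𝕋 (Bᴴ * C) (u b))
  rw [mul_assoc, map_mul, mul_apply_eq_comp, ← hX, map_sum, inner_sum]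
  refine Finset.sum_congr rfl fun a _ => ?_
  rw [trace_mul_ketBra, map_smul, inner_smul_right, mul_comm, map_mul, mul_apply_eq_comp,
    toEuclideanCLM_conjTranspose, ContinuousLinearMap.adjoint_inner_right]

theorem IsHermitian.toEuclideanCLM_eigenvectorBasis (hA : A.IsHermitian) (j : n) :
    𝕋 A (hA.eigenvectorBasis j) = (hA.eigenvalues j : 𝕜) • hA.eigenvectorBasis j := by
  apply WithLp.ofLp_injective
  rw [ofLp_toEuclideanCLM, hA.mulVec_eigenvectorBasis, WithLp.ofLp_smul,
    RCLike.real_smul_eq_coe_smul (K := 𝕜)]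

theorem IsHermitian.trace_mul_conjTranspose_mul_self (hA : A.IsHermitian) (B : Matrix n n 𝕜) :
    (A * Bᴴ * B).trace = ((∑ j, hA.eigenvalues j * ‖𝕋 B (hA.eigenvectorBasis j)‖ ^ 2 : ℝ) : 𝕜) := by
  rw [mul_assoc, trace_mul_comm, trace_eq_sum_inner _ hA.eigenvectorBasis]
  push_cast
  refine Finset.sum_congr rfl fun j _ => ?_
  rw [map_mul, mul_apply_eq_comp, hA.toEuclideanCLM_eigenvectorBasis, map_smul, inner_smul_right,
    map_mul, mul_apply_eq_comp, toEuclideanCLM_conjTranspose,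
    ContinuousLinearMap.adjoint_inner_right, inner_self_eq_norm_sq_to_K]

theorem PosDef.trace_inv (hA : A.PosDef) :
    A⁻¹.trace = ∑ j, (hA.1.eigenvalues j : 𝕜)⁻¹ := by
  rw [trace_eq_sum_inner _ hA.1.eigenvectorBasis]
  refine Finset.sum_congr rfl fun j _ => ?_
  have hwj : (hA.1.eigenvalues j : 𝕜) ≠ 0 := RCLike.ofReal_ne_zero.2 (hA.eigenvalues_pos j).ne'
  have hinv : 𝕋 A⁻¹ (hA.1.eigenvectorBasis j) =
      (hA.1.eigenvalues j : 𝕜)⁻¹ • hA.1.eigenvectorBasis j := by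
    rw [eq_inv_smul_iff₀ hwj, ← map_smul, ← hA.1.toEuclideanCLM_eigenvectorBasis,
      ← mul_apply_eq_comp, ← map_mul, nonsing_inv_mul _ ((isUnit_iff_isUnit_det A).1 hA.isUnit),
      map_one]
    rfl
  rw [hinv, inner_smul_right, inner_self_eq_norm_sq_to_K, hA.1.eigenvectorBasis.orthonormal.1 j]
  simp

end Matrix

section MatrixProductState

open Matrix

variable {d k : ℕ} (v : Fin d → Matrix (Fin k) (Fin k) ℂ) {ρ : Matrix (Fin k) (Fin k) ℂ}

local notation "𝕋" => toEuclideanCLM (n := Fin k) (𝕜 := ℂ)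

noncomputable def wordProd {n : ℕ} (i : Fin n → Fin d) : Matrix (Fin k) (Fin k) ℂ :=
  (List.ofFn fun j => v (i j)).prod

theorem wordProd_cons {n : ℕ} (x : Fin d) (i : Fin n → Fin d) :
    wordProd v (Fin.cons x i) = v x * wordProd v i := by
  simp [wordProd, List.ofFn_succ]

theorem transferIter_eq_sum_wordProd (n : ℕ) (X : Matrix (Fin k) (Fin k) ℂ) :
    transferIter v n X = ∑ i : Fin n → Fin d, (wordProd v i)ᴴ * X * wordProd v i := by
  induction n generalizing X with
  | zero => simp [transferIter, wordProd]
  | succ n ih =>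
    rw [transferIter, Function.iterate_succ_apply, ← transferIter, ih,
      ← (Fin.consEquiv fun _ : Fin (n + 1) => Fin d).sum_comp, Fintype.sum_prod_type,
      Finset.sum_comm]
    refine Finset.sum_congr rfl fun i _ => ?_
    rw [Finset.mul_sum, Finset.sum_mul]
    refine Finset.sum_congr rfl fun x _ => ?_
    change _ = (wordProd v (Fin.cons x i))ᴴ * X * wordProd v (Fin.cons x i)
    rw [wordProd_cons, conjTranspose_mul]
    noncomm_ring

theorem inner_mpsVec (L : ℕ) (B C : Matrix (Fin k) (Fin k) ℂ) :
    ⟪mpsVec v L B, mpsVec v L C⟫_ℂ =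
      ∑ i : Fin L → Fin d, star (B * wordProd v i).trace * (C * wordProd v i).trace := by
  simp only [mpsVec, PiLp.inner_apply, WithLp.equiv_symm_apply, RCLike.inner_apply, wordProd]
  exact Finset.sum_congr rfl fun i _ => mul_comm _ _

theorem inner_mpsVec_eq_sum_transferIter {ι : Type*} [Fintype ι]
    (u : OrthonormalBasis ι ℂ (EuclideanSpace ℂ (Fin k))) (L : ℕ) (B C : Matrix (Fin k) (Fin k) ℂ) :
    ⟪mpsVec v L B, mpsVec v L C⟫_ℂ =
      ∑ a, ∑ b, ⟪𝕋 B (u a), 𝕋 (transferIter v L (ketBra (u a) (u b))) (𝕋 C (u b))⟫_ℂ := by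
  simp_rw [inner_mpsVec, star_trace_mul_mul_trace_mul u, transferIter_eq_sum_wordProd, map_sum,
    _root_.sum_apply, inner_sum]
  rw [Finset.sum_comm]
  exact Finset.sum_congr rfl fun a _ => Finset.sum_comm

theorem inner_mpsVec_sub_trace_eq_sum {ι : Type*} [Fintype ι]
    (u : OrthonormalBasis ι ℂ (EuclideanSpace ℂ (Fin k))) (L : ℕ) (B C : Matrix (Fin k) (Fin k) ℂ) :
    ⟪mpsVec v L B, mpsVec v L C⟫_ℂ - (ρ * Bᴴ * C).trace =
      ∑ a, ∑ b, ⟪𝕋 B (u a), 𝕋 (transferIter v L (ketBra (u a) (u b)) -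
        (ρ * ketBra (u a) (u b)).trace • 1) (𝕋 C (u b))⟫_ℂ := by
  rw [inner_mpsVec_eq_sum_transferIter v u, trace_mul_conjTranspose_mul_eq_sum u,
    ← Finset.sum_sub_distrib]
  refine Finset.sum_congr rfl fun a _ => ?_
  rw [← Finset.sum_sub_distrib]
  refine Finset.sum_congr rfl fun b _ => ?_
  rw [map_sub, map_smul, map_one, _root_.sub_apply, inner_sub_right,
    _root_.smul_apply, one_apply_eq_self, inner_smul_right]

theorem matOpNorm_ketBra (x y : EuclideanSpace ℂ (Fin k)) : matOpNorm (ketBra x y) = ‖x‖ * ‖y‖ :=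
  (congrArg norm (toEuclideanCLM_ketBra x y)).trans (norm_rankOne x y)

theorem mpsVec_sub (L : ℕ) (B C : Matrix (Fin k) (Fin k) ℂ) :
    mpsVec v L (B - C) = mpsVec v L B - mpsVec v L C := by
  ext i
  simp [mpsVec, Matrix.sub_mul, trace_sub]

theorem rhoNorm_nonneg (B : Matrix (Fin k) (Fin k) ℂ) : 0 ≤ rhoNorm ρ B :=
  Real.sqrt_nonneg _

theorem rhoNorm_sq_eq_sum (hρ : ρ.PosSemidef) (B : Matrix (Fin k) (Fin k) ℂ) :
    rhoNorm ρ B ^ 2 = ∑ j, hρ.1.eigenvalues j * ‖𝕋 B (hρ.1.eigenvectorBasis j)‖ ^ 2 := by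
  have hsum : 0 ≤ ∑ j, hρ.1.eigenvalues j * ‖𝕋 B (hρ.1.eigenvectorBasis j)‖ ^ 2 :=
    Finset.sum_nonneg fun j _ => mul_nonneg (hρ.eigenvalues_nonneg j) (sq_nonneg _)
  rw [rhoNorm, hρ.1.trace_mul_conjTranspose_mul_self]
  exact Real.sq_sqrt hsum

theorem trace_mul_conjTranspose_mul_self_eq_rhoNorm_sq (hρ : ρ.PosSemidef)
    (B : Matrix (Fin k) (Fin k) ℂ) : (ρ * Bᴴ * B).trace = ((rhoNorm ρ B ^ 2 : ℝ) : ℂ) := by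
  rw [rhoNorm_sq_eq_sum hρ, hρ.1.trace_mul_conjTranspose_mul_self]
  rfl

theorem re_trace_inv_eq_sum (hρ : ρ.PosDef) :
    (ρ⁻¹.trace).re = ∑ j, (hρ.1.eigenvalues j)⁻¹ := by
  simp [hρ.trace_inv]

theorem sum_norm_le_sqrt_trace_inv_mul_rhoNorm (hρ : ρ.PosDef) (B : Matrix (Fin k) (Fin k) ℂ) :
    ∑ j, ‖𝕋 B (hρ.1.eigenvectorBasis j)‖ ≤ √(ρ⁻¹.trace).re * rhoNorm ρ B := by
  rw [re_trace_inv_eq_sum hρ, ← Real.sqrt_sq (rhoNorm_nonneg B), rhoNorm_sq_eq_sum hρ.posSemidef]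
  exact Finset.sum_le_sqrt_sum_inv_mul_sqrt_sum_mul_sq _ hρ.eigenvalues_pos fun _ => norm_nonneg _

theorem eq_zero_of_rhoNorm_eq_zero (hρ : ρ.PosDef) {B : Matrix (Fin k) (Fin k) ℂ}
    (hB : rhoNorm ρ B = 0) : B = 0 := by
  have hsum := rhoNorm_sq_eq_sum hρ.posSemidef B
  rw [hB, zero_pow two_ne_zero, eq_comm, Finset.sum_eq_zero_iff_of_nonneg fun j _ =>
    mul_nonneg (hρ.eigenvalues_pos j).le (sq_nonneg _)] at hsum
  have hbasis : ∀ j, 𝕋 B (hρ.1.eigenvectorBasis j) = 0 := fun j => by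
    simpa [(hρ.eigenvalues_pos j).ne'] using hsum j (Finset.mem_univ j)
  have : 𝕋 B = 0 := ContinuousLinearMap.coe_injective <|
    (hρ.1.eigenvectorBasis.toBasis.ext fun j => by simpa using hbasis j)
  exact (map_eq_zero_iff _ (𝕋).injective).1 this

variable {L : ℕ} {ε : ℝ}

theorem norm_inner_mpsVec_sub_trace_le {ι : Type*} [Fintype ι]
    (u : OrthonormalBasis ι ℂ (EuclideanSpace ℂ (Fin k)))
    (hε : ∀ X, matOpNorm (transferIter v L X - (ρ * X).trace • 1) ≤ ε * matOpNorm X)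
    (B C : Matrix (Fin k) (Fin k) ℂ) :
    ‖⟪mpsVec v L B, mpsVec v L C⟫_ℂ - (ρ * Bᴴ * C).trace‖ ≤
      ε * (∑ a, ‖𝕋 B (u a)‖) * ∑ b, ‖𝕋 C (u b)‖ := by
  rw [inner_mpsVec_sub_trace_eq_sum v u]
  refine norm_sum_sum_inner_le _ _ _ _ _ fun a b => ?_
  calc matOpNorm _ ≤ ε * matOpNorm (ketBra (u a) (u b)) := hε _
    _ = ε := by rw [matOpNorm_ketBra, u.orthonormal.1 a, u.orthonormal.1 b, mul_one, mul_one]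

theorem norm_inner_mpsVec_sub_trace_le_rhoNorm (hρ : ρ.PosDef) (hε0 : 0 ≤ ε)
    (hε : ∀ X, matOpNorm (transferIter v L X - (ρ * X).trace • 1) ≤ ε * matOpNorm X)
    (B C : Matrix (Fin k) (Fin k) ℂ) :
    ‖⟪mpsVec v L B, mpsVec v L C⟫_ℂ - (ρ * Bᴴ * C).trace‖ ≤
      ε * (ρ⁻¹.trace).re * rhoNorm ρ B * rhoNorm ρ C := by
  have htr : 0 ≤ (ρ⁻¹.trace).re := by
    rw [re_trace_inv_eq_sum hρ]
    exact Finset.sum_nonneg fun j _ => (inv_pos.2 (hρ.eigenvalues_pos j)).le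
  calc _ ≤ ε * (∑ a, ‖𝕋 B (hρ.1.eigenvectorBasis a)‖) * ∑ b, ‖𝕋 C (hρ.1.eigenvectorBasis b)‖ :=
        norm_inner_mpsVec_sub_trace_le v _ hε B C
    _ ≤ ε * (√(ρ⁻¹.trace).re * rhoNorm ρ B) * (√(ρ⁻¹.trace).re * rhoNorm ρ C) :=
        mul_le_mul (mul_le_mul_of_nonneg_left (sum_norm_le_sqrt_trace_inv_mul_rhoNorm hρ B) hε0)
          (sum_norm_le_sqrt_trace_inv_mul_rhoNorm hρ C) (Finset.sum_nonneg fun _ _ => norm_nonneg _)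
          (mul_nonneg hε0 (mul_nonneg (Real.sqrt_nonneg _) (rhoNorm_nonneg B)))
    _ = ε * (ρ⁻¹.trace).re * rhoNorm ρ B * rhoNorm ρ C := by
        linear_combination (ε * rhoNorm ρ B * rhoNorm ρ C) * Real.mul_self_sqrt htr

theorem abs_norm_mpsVec_sq_sub_rhoNorm_sq_le (hρ : ρ.PosDef) (hε0 : 0 ≤ ε)
    (hε : ∀ X, matOpNorm (transferIter v L X - (ρ * X).trace • 1) ≤ ε * matOpNorm X)
    (B : Matrix (Fin k) (Fin k) ℂ) :
    |‖mpsVec v L B‖ ^ 2 - rhoNorm ρ B ^ 2| ≤ ε * (ρ⁻¹.trace).re * rhoNorm ρ B ^ 2 := by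
  have h := norm_inner_mpsVec_sub_trace_le_rhoNorm v hρ hε0 hε B B
  have hreal : ⟪mpsVec v L B, mpsVec v L B⟫_ℂ - (ρ * Bᴴ * B).trace =
      ((‖mpsVec v L B‖ ^ 2 - rhoNorm ρ B ^ 2 : ℝ) : ℂ) := by
    rw [inner_self_eq_norm_sq_to_K, trace_mul_conjTranspose_mul_self_eq_rhoNorm_sq hρ.posSemidef]
    push_cast
    rfl
  rwa [hreal, Complex.norm_real, Real.norm_eq_abs, mul_assoc _ (rhoNorm ρ B), ← sq] at h

theorem mpsVec_injective (hρ : ρ.PosDef) {δ : ℝ} (hδ : δ < 1)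
    (h : ∀ B, (1 - δ) * rhoNorm ρ B ^ 2 ≤ ‖mpsVec v L B‖ ^ 2) :
    Function.Injective (mpsVec v L) := by
  intro B C hBC
  have hzero := h (B - C)
  rw [mpsVec_sub, hBC, sub_self, norm_zero, zero_pow two_ne_zero] at hzero
  have : rhoNorm ρ (B - C) = 0 := pow_eq_zero_iff two_ne_zero |>.1 <|
    le_antisymm (nonpos_of_mul_nonpos_right hzero (sub_pos.2 hδ)) (sq_nonneg _)
  exact sub_eq_zero.1 (eq_zero_of_rhoNorm_eq_zero hρ this)

end MatrixProductState

theorem mps_overlap_estimates_general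
    {d k : ℕ} (v : Fin d → Matrix (Fin k) (Fin k) ℂ)
    (ρ : Matrix (Fin k) (Fin k) ℂ) (hρ : ρ.PosDef)
    (c lam : ℝ) (hc : 0 ≤ c) (hlam0 : 0 ≤ lam)
    (hconv : ∀ (n : ℕ) (B : Matrix (Fin k) (Fin k) ℂ),
        matOpNorm (transferIter v n B - (ρ * B).trace • (1 : Matrix (Fin k) (Fin k) ℂ)) ≤
          c * lam ^ n * matOpNorm B)
    (L : ℕ) :
    (∀ B C : Matrix (Fin k) (Fin k) ℂ,
        ‖(inner ℂ (mpsVec v L B) (mpsVec v L C) : ℂ) - (ρ * Bᴴ * C).trace‖ ≤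
          c * (ρ⁻¹.trace).re * lam ^ L * rhoNorm ρ B * rhoNorm ρ C) ∧
      (∀ B : Matrix (Fin k) (Fin k) ℂ,
        (1 - c * (ρ⁻¹.trace).re * lam ^ L) * rhoNorm ρ B ^ 2 ≤ ‖mpsVec v L B‖ ^ 2 ∧
          ‖mpsVec v L B‖ ^ 2 ≤ (1 + c * (ρ⁻¹.trace).re * lam ^ L) * rhoNorm ρ B ^ 2) ∧
      (c * (ρ⁻¹.trace).re * lam ^ L < 1 → Function.Injective (mpsVec v L)) := by
  have hε0 : 0 ≤ c * lam ^ L := mul_nonneg hc (pow_nonneg hlam0 L)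
  have norm_sq_bounds : ∀ B : Matrix (Fin k) (Fin k) ℂ,
      (1 - c * (ρ⁻¹.trace).re * lam ^ L) * rhoNorm ρ B ^ 2 ≤ ‖mpsVec v L B‖ ^ 2 ∧
        ‖mpsVec v L B‖ ^ 2 ≤ (1 + c * (ρ⁻¹.trace).re * lam ^ L) * rhoNorm ρ B ^ 2 := fun B => by
    have h := abs_le.1 (abs_norm_mpsVec_sq_sub_rhoNorm_sq_le v hρ hε0 (hconv L) B)
    constructor <;> linarith [h.1, h.2]
  refine ⟨fun B C => ?_, norm_sq_bounds, fun hsmall =>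
    mpsVec_injective v hρ hsmall fun B => (norm_sq_bounds B).1⟩
  exact (norm_inner_mpsVec_sub_trace_le_rhoNorm v hρ hε0 (hconv L) B C).trans_eq (by ring)

/-- **Lemma B.1 / equations (B.6)–(B.8)** for a primitive translation-invariant MPS:
`|⟨Γ_{[l,r]}(B), Γ_{[l,r]}(C)⟩ − Tr(ρ B* C)| ≤ c Tr(ρ⁻¹) λ^{r−l+1} ‖B‖_ρ ‖C‖_ρ`,
the resulting two-sided bound on `‖Γ_{[l,r]}(B)‖²`, and injectivity of `Γ_{[l,r]}`
once `c Tr(ρ⁻¹) λ^{r−l+1} < 1`.  Here `L = r − l + 1` is the number of sites. -/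
theorem mps_overlap_estimates
    {d k : ℕ} (v : Fin d → Matrix (Fin k) (Fin k) ℂ)
    (hunital : ∑ i, (v i)ᴴ * v i = 1)
    (ρ : Matrix (Fin k) (Fin k) ℂ) (hρ : ρ.PosDef) (hρtr : ρ.trace = 1)
    (hinv : ∑ i, v i * ρ * (v i)ᴴ = ρ)
    (c lam : ℝ) (hc : 0 ≤ c) (hlam0 : 0 ≤ lam) (hlam1 : lam < 1)
    (hconv : ∀ (n : ℕ) (B : Matrix (Fin k) (Fin k) ℂ),
        matOpNorm (transferIter v n B - (ρ * B).trace • (1 : Matrix (Fin k) (Fin k) ℂ)) ≤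
          c * lam ^ n * matOpNorm B)
    (L : ℕ) :
    (∀ B C : Matrix (Fin k) (Fin k) ℂ,
        ‖(inner ℂ (mpsVec v L B) (mpsVec v L C) : ℂ) - (ρ * Bᴴ * C).trace‖ ≤
          c * (ρ⁻¹.trace).re * lam ^ L * rhoNorm ρ B * rhoNorm ρ C) ∧
      (∀ B : Matrix (Fin k) (Fin k) ℂ,
        (1 - c * (ρ⁻¹.trace).re * lam ^ L) * rhoNorm ρ B ^ 2 ≤ ‖mpsVec v L B‖ ^ 2 ∧
          ‖mpsVec v L B‖ ^ 2 ≤ (1 + c * (ρ⁻¹.trace).re * lam ^ L) * rhoNorm ρ B ^ 2) ∧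
      (c * (ρ⁻¹.trace).re * lam ^ L < 1 → Function.Injective (mpsVec v L)) :=
  mps_overlap_estimates_general v ρ hρ c lam hc hlam0 hconv L
end
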